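/- For pairwise distinct μ_1,…,μ_N ∈ ℂ and n ≥ 2, S_n(ℂ \ {μ_1,…,μ_N}) = ℂ^n \ ⋃_{j=1}^N H_j, where H_j = {(μ_j + z_1, μ_j z_1 + z_2, …, μ_j z_{n-1}) : z ∈ ℂ^{n-1}} are affine hyperplanes. -/

import Mathlib

/-- The symmetrization map `π_n : ℂ^n → ℂ^n`, whose `j`-th coordinate is the
`(j+1)`-st elementary symmetric polynomial of the entries. -/
noncomputable def symPoly (n : ℕ) (lam : Fin n → ℂ) : Fin n → ℂ :=
  fun j => ∑ t ∈ Finset.powersetCard ((j : ℕ) + 1) Finset.univ, ∏ i ∈ t, lam i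

/-- The `n`-fold symmetric product `S_n(D) = π_n(D^n)` of a planar set `D`. -/
noncomputable def symProd (n : ℕ) (D : Set ℂ) : Set (Fin n → ℂ) :=
  symPoly n '' {lam | ∀ i, lam i ∈ D}


/-- The affine hyperplane `H(μ) = {(μ + z₁, μ z₁ + z₂, …, μ z_{n-2} + z_{n-1}, μ z_{n-1})}`
associated to `μ ∈ ℂ`, encoded via an auxiliary tuple `z : Fin (n+1) → ℂ`
with `z 0 = 1` and `z n = 0`. -/
def hplane (n : ℕ) (μ : ℂ) : Set (Fin n → ℂ) :=
  {v | ∃ z : Fin (n + 1) → ℂ, z 0 = 1 ∧ z (Fin.last n) = 0 ∧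
    ∀ j : Fin n, v j = μ * z j.castSucc + z j.succ}

/-!
Identify `v ∈ ℂⁿ` with the monic polynomial `p_v = Xⁿ + v₀ Xⁿ⁻¹ + ⋯ + v_{n-1}`. By Vieta,
`p_{π_n(λ)} = ∏ᵢ (X + λᵢ)`, and as ℂ is algebraically closed every `p_v` factors this way, so
`π_n` is onto. The tuple `z` in the definition of `H(μ)` is exactly the Horner scheme evaluating
`p_v` at `-μ`, so `v ∈ H(μ)` iff `p_v(-μ) = 0`; hence `π_n(λ) ∈ H(μ)` iff `μ` is one of the `λᵢ`.
-/

open Polynomial Finset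

theorem Multiset.exists_fin_univ_map_eq {α : Type*} {n : ℕ} (s : Multiset α)
    (hs : Multiset.card s = n) : ∃ f : Fin n → α, univ.val.map f = s := by
  obtain ⟨l, rfl⟩ := Quot.exists_rep s
  obtain rfl : l.length = n := hs
  exact ⟨l.get, by rw [Fin.univ_val_map, List.ofFn_get]; rfl⟩

section
variable {R : Type*} [CommRing R]

noncomputable def monicPoly (n : ℕ) (v : Fin n → R) : R[X] :=
  X ^ n + ∑ j : Fin n, C (v j.rev) * X ^ (j : ℕ)

theorem monic_monicPoly (n : ℕ) (v : Fin n → R) : (monicPoly n v).Monic :=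
  monic_X_pow_add (degree_sum_fin_lt _)

theorem natDegree_monicPoly [Nontrivial R] (n : ℕ) (v : Fin n → R) :
    (monicPoly n v).natDegree = n := by
  rw [monicPoly, natDegree_add_eq_left_of_degree_lt] <;> simp [degree_sum_fin_lt]

theorem coeff_monicPoly (n : ℕ) (v : Fin n → R) (i : Fin n) :
    (monicPoly n v).coeff i = v i.rev := by
  simp [monicPoly, finsetSum_coeff, coeff_X_pow, Fin.val_inj, i.isLt.ne]

theorem monicPoly_injective (n : ℕ) : Function.Injective (monicPoly (R := R) n) := fun v w h =>
  funext fun i => by simpa only [coeff_monicPoly, Fin.rev_rev] using congrArg (coeff · i.rev) h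

theorem monicPoly_succ (n : ℕ) (v : Fin (n + 1) → R) :
    monicPoly (n + 1) v = X * monicPoly n (Fin.init v) + C (v (Fin.last n)) := by
  simp only [monicPoly, Fin.sum_univ_succ, Fin.rev_zero, Fin.rev_succ, Fin.init, Fin.val_zero,
    Fin.val_succ, mul_add, Finset.mul_sum]
  ring_nf

theorem eval_monicPoly_of_horner {n : ℕ} (v : Fin n → R) (x : R) (z : Fin (n + 1) → R)
    (h0 : z 0 = 1) (hs : ∀ j, z j.succ = x * z j.castSucc + v j) :
    (monicPoly n v).eval x = z (Fin.last n) := by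
  induction n with
  | zero => simp [monicPoly, ← h0]
  | succ n ih =>
    have hz := ih (Fin.init v) (fun i => z i.castSucc) h0 fun j => by
      rw [← Fin.succ_castSucc]; exact hs j.castSucc
    rw [monicPoly_succ, eval_add, eval_mul, eval_X, eval_C, hz, ← Fin.succ_last, hs]

end

theorem monicPoly_symPoly (n : ℕ) (lam : Fin n → ℂ) :
    monicPoly n (symPoly n lam) = ∏ i, (X + C (lam i)) := by
  have vieta := Multiset.prod_X_add_C_eq_sum_esymm (univ.val.map lam)
  simp only [Multiset.map_map, Multiset.card_map, card_val, card_univ, Fintype.card_fin,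
    Finset.sum_range_succ'] at vieta
  rw [Finset.prod_eq_multiset_prod]
  refine Eq.trans ?_ vieta.symm
  rw [monicPoly, add_comm]
  congr 1
  · rw [← Fin.sum_univ_eq_sum_range
      (fun k => C ((univ.val.map lam).esymm (k + 1)) * X ^ (n - (k + 1)))]
    refine Fintype.sum_equiv Fin.revPerm _ _ fun j => ?_
    rw [Fin.revPerm_apply, symPoly, ← Finset.esymm_map_val, Fin.val_rev,
      show n - (n - (j + 1) + 1) = j by omega]
  · simp [Multiset.esymm]

theorem symPoly_surjective (n : ℕ) : Function.Surjective (symPoly n) := by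
  intro v
  have hsplit : (monicPoly n v).Splits := IsAlgClosed.splits _
  obtain ⟨lam, hlam⟩ := Multiset.exists_fin_univ_map_eq ((monicPoly n v).roots.map Neg.neg)
    (by rw [Multiset.card_map, splits_iff_card_roots.mp hsplit, natDegree_monicPoly])
  refine ⟨lam, monicPoly_injective n ?_⟩
  calc monicPoly n (symPoly n lam) = ((univ.val.map lam).map (X + C ·)).prod := by
        rw [monicPoly_symPoly, Multiset.map_map]; rfl
    _ = ((monicPoly n v).roots.map (X - C ·)).prod := by
        simp only [hlam, Multiset.map_map, Function.comp_def, C_neg, sub_eq_add_neg]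
    _ = monicPoly n v := (hsplit.eq_prod_roots_of_monic (monic_monicPoly n v)).symm

theorem mem_hplane_iff (n : ℕ) (μ : ℂ) (v : Fin n → ℂ) :
    v ∈ hplane n μ ↔ (monicPoly n v).IsRoot (-μ) := by
  constructor
  · rintro ⟨z, h0, hlast, hv⟩
    rw [IsRoot, eval_monicPoly_of_horner v (-μ) z h0 fun j => by rw [hv j]; ring, hlast]
  · intro hroot
    let z : Fin (n + 1) → ℂ := Fin.induction 1 fun j zj => -μ * zj + v j
    have h0 : z 0 = 1 := Fin.induction_zero ..
    have hs : ∀ j, z j.succ = -μ * z j.castSucc + v j := fun j => Fin.induction_succ ..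
    refine ⟨z, h0, ?_, fun j => by rw [hs]; ring⟩
    exact (eval_monicPoly_of_horner v (-μ) z h0 hs).symm.trans hroot

theorem symPoly_mem_hplane_iff (n : ℕ) (μ : ℂ) (lam : Fin n → ℂ) :
    symPoly n lam ∈ hplane n μ ↔ μ ∈ Set.range lam := by
  simp only [mem_hplane_iff, monicPoly_symPoly, IsRoot.def, eval_prod, eval_add, eval_X, eval_C,
    Finset.prod_eq_zero_iff, Finset.mem_univ, true_and, neg_add_eq_zero, Set.mem_range]
  exact exists_congr fun _ => eq_comm

theorem symProd_eq (n : ℕ) (D : Set ℂ) : symProd n D = ⋂ μ ∈ Dᶜ, (hplane n μ)ᶜ := by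
  ext v
  simp only [Set.mem_iInter, Set.mem_compl_iff]
  constructor
  · rintro ⟨lam, hlam, rfl⟩ μ hμ hv
    obtain ⟨i, rfl⟩ := (symPoly_mem_hplane_iff n μ lam).1 hv
    exact hμ (hlam i)
  · intro hv
    obtain ⟨lam, rfl⟩ := symPoly_surjective n v
    refine ⟨lam, fun i => by_contra fun hi => hv _ hi ?_, rfl⟩
    exact (symPoly_mem_hplane_iff n _ lam).2 ⟨i, rfl⟩

theorem symProd_complement_eq_general (n N : ℕ) (μ : Fin N → ℂ) :
    symProd n ((Set.range μ)ᶜ) = (⋃ j, hplane n (μ j))ᶜ := by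
  rw [symProd_eq, compl_compl, Set.biInter_range, Set.compl_iUnion]

/-- For pairwise distinct `μ_1, …, μ_N ∈ ℂ` and `n ≥ 2`,
`S_n(ℂ \ {μ_1,…,μ_N}) = ℂ^n \ ⋃_j H_j` where `H_j = H(μ_j)` are affine
hyperplanes. -/
theorem symProd_complement_eq (n N : ℕ) (hn : 2 ≤ n)
    (μ : Fin N → ℂ) (hμ : Function.Injective μ) :
    symProd n ((Set.range μ)ᶜ) = (⋃ j, hplane n (μ j))ᶜ :=
  symProd_complement_eq_general n N μ
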